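/- arXiv:0801.2797 — 4 statements merged into one kernel-verified Lean document; each statement's English description precedes it below -/
import Mathlib

section
/- Let d ≥ 2 and k ≥ 1 be integers, let G be a finite graph with maximum degree at most d, and let v be a vertex of G. Then the number of vertex sets K ⊆ V(G) with v ∈ K, |K| ≤ k, and K inducing a connected subgraph of G, is at most d^{2k}. -/
open scoped Classical

noncomputable section

/-- A finite simple graph, with vertex set `Fin n`. -/
structure FinGraph where
  n : ℕ
  adj : SimpleGraph (Fin n)

namespace FinGraph

/-- `G` has all vertex degrees at most `d`. -/
def DegreeBound (G : FinGraph) (d : ℕ) : Prop :=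
  ∀ v : Fin G.n, (G.adj.neighborSet v).ncard ≤ d

/-- `G` is `(δ,k)`-hyper-finite: one can delete a set `S` of at most `δ·|V(G)|` edges
so that all connected components of the remaining graph have at most `k` vertices. -/
def HyperFinite (G : FinGraph) (δ : ℝ) (k : ℕ) : Prop :=
  ∃ S ⊆ G.adj.edgeSet, (S.ncard : ℝ) ≤ δ * G.n ∧
    ∀ v : Fin G.n, (((G.adj.deleteEdges S).connectedComponentMk v).supp).ncard ≤ k

/-- The ball of radius `r` around `v` in `G`: all vertices at graph distance at most `r`. -/
def ball (G : FinGraph) (v : Fin G.n) (r : ℕ) : Set (Fin G.n) :=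
  {u | ∃ p : G.adj.Walk v u, p.length ≤ r}

lemma mem_ball_self (G : FinGraph) (v : Fin G.n) (r : ℕ) : v ∈ G.ball v r :=
  ⟨SimpleGraph.Walk.nil, by simp⟩

end FinGraph

/-- A rooted finite graph. -/
structure RootedGraph where
  n : ℕ
  adj : SimpleGraph (Fin n)
  root : Fin n

/-- Rooted isomorphism: a graph isomorphism mapping root to root. -/
def RootedGraph.RIso (H K : RootedGraph) : Prop :=
  ∃ φ : H.adj ≃g K.adj, φ H.root = K.root

instance rootedSetoid : Setoid RootedGraph where
  r := RootedGraph.RIso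
  iseqv := by
    constructor
    · intro H; exact ⟨RelIso.refl _, rfl⟩
    · rintro H K ⟨φ, hφ⟩
      refine ⟨φ.symm, ?_⟩
      rw [← hφ]
      exact φ.symm_apply_apply H.root
    · rintro H K L ⟨φ, hφ⟩ ⟨ψ, hψ⟩
      exact ⟨φ.trans ψ, by rw [RelIso.trans_apply, hφ, hψ]⟩

/-- Isomorphism types of rooted finite graphs. -/
def RootedIsoClass := Quotient rootedSetoid

/-- The isomorphism type of the rooted ball `(B_G(v,r), v)`. -/
noncomputable def FinGraph.ballType (G : FinGraph) (v : Fin G.n) (r : ℕ) : RootedIsoClass :=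
  letI : Fintype (G.ball v r) := Fintype.ofFinite _
  let e := Fintype.equivFin (G.ball v r)
  Quotient.mk rootedSetoid
    ⟨Fintype.card (G.ball v r),
     SimpleGraph.comap (⇑e.symm) (G.adj.induce (G.ball v r)),
     e ⟨v, G.mem_ball_self v r⟩⟩

/-- `μ_r^G(H)`: the fraction of vertices of `G` whose rooted `r`-ball has isomorphism type `H`. -/
noncomputable def mu (G : FinGraph) (r : ℕ) (H : RootedIsoClass) : ℝ :=
  ({v : Fin G.n | G.ballType v r = H}.ncard : ℝ) / G.n

/-- `ρ_r(G,G') = Σ_H |μ_r^G(H) - μ_r^{G'}(H)|`, summed over all isomorphism types of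
rooted graphs (only finitely many summands are nonzero). -/
noncomputable def rho (r : ℕ) (G G' : FinGraph) : ℝ :=
  ∑' H : RootedIsoClass, |mu G r H - mu G' r H|

/-- Isomorphism of (unrooted) finite graphs. -/
def FinGraph.Iso (G G' : FinGraph) : Prop := Nonempty (G.adj ≃g G'.adj)

/-- `H` occurs as a subgraph of `G`. -/
def FinGraph.IsSubgraphOf (H G : FinGraph) : Prop :=
  ∃ f : Fin H.n ↪ Fin G.n, ∀ u v, H.adj.Adj u v → G.adj.Adj (f u) (f v)

/-- `G` is `ε`-far (with respect to degree bound `d`) from the graph property `P`: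
every graph on the vertex set of `G` satisfying `P` differs from `G` in at least
`ε·d·|V(G)|` edges. -/
def FarFrom (G : FinGraph) (d : ℕ) (ε : ℝ) (P : Set FinGraph) : Prop :=
  ∀ H : SimpleGraph (Fin G.n), (⟨G.n, H⟩ : FinGraph) ∈ P →
    ε * d * G.n ≤ ((symmDiff G.adj.edgeSet H.edgeSet).ncard : ℝ)

/-- `H` is a minor of `G` (branch-set definition: equivalent, for simple graphs, to
obtaining `H` from `G` by vertex deletions, edge deletions and edge contractions). -/
def SimpleGraph.HasMinor {V W : Type*} (G : SimpleGraph V) (H : SimpleGraph W) : Prop :=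
  ∃ B : W → Set V,
    (∀ u, (G.induce (B u)).Connected) ∧
    (∀ u u', u ≠ u' → Disjoint (B u) (B u')) ∧
    (∀ u u', H.Adj u u' → ∃ x ∈ B u, ∃ y ∈ B u', G.Adj x y)

/-- `H` is a minor of the finite graph `G`. -/
def FinGraph.HasMinor (G H : FinGraph) : Prop := SimpleGraph.HasMinor G.adj H.adj

/-- A graph property (class of graphs) closed under isomorphism. -/
def IsoClosed (P : Set FinGraph) : Prop :=
  ∀ G G' : FinGraph, FinGraph.Iso G G' → G ∈ P → G' ∈ P

/-- A monotone graph property: closed under taking subgraphs. -/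
def MonotoneProp (P : Set FinGraph) : Prop :=
  ∀ G ∈ P, ∀ H : FinGraph, H.IsSubgraphOf G → H ∈ P

/-- A minor-closed graph property. -/
def MinorClosed (P : Set FinGraph) : Prop :=
  ∀ G ∈ P, ∀ H : FinGraph, G.HasMinor H → H ∈ P

/-- A hyper-finite family of graphs. -/
def HyperFiniteFamily (A : Set FinGraph) : Prop :=
  ∀ δ : ℝ, 0 < δ → ∃ k : ℕ, 1 ≤ k ∧ ∀ G ∈ A, G.HyperFinite δ k

end

/-! Every connected set `K ∋ v` is the vertex set of a closed walk from `v` of length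
`2 (|K| - 1)`: grow such a walk one vertex at a time by splicing in a back-and-forth step along
an edge that leaves its current vertex set. Hence there are at most as many such sets with
`|K| ≤ k` as closed walks from `v` of length `< 2k`, and with all degrees at most `d` there are
at most `∑_{l < 2k} d ^ l < d ^ (2k)` of those. -/

namespace SimpleGraph

open Finset

variable {V : Type*} {G : SimpleGraph V}

theorem Walk.exists_support_insert_of_adj {a b y u : V} (w : G.Walk a b) (hy : y ∈ w.support)
    (h : G.Adj y u) :
    ∃ w' : G.Walk a b, w'.length = w.length + 2 ∧
      {x | x ∈ w'.support} = insert u {x | x ∈ w.support} := by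
  refine ⟨(w.takeUntil y hy).append (.cons h (.cons h.symm (w.dropUntil y hy))), ?_, ?_⟩
  · have := congrArg Walk.length (w.take_spec hy)
    simp only [Walk.length_append, Walk.length_cons] at this ⊢
    omega
  · ext x
    conv_rhs => rw [← w.take_spec hy]
    simp only [Set.mem_ofPred_eq, Set.mem_insert_iff, Walk.mem_support_append_iff,
      Walk.support_cons, List.mem_cons]
    have := (w.takeUntil y hy).end_mem_support
    grind

theorem exists_adj_of_preconnected_induce {K T : Set V} (hK : (G.induce K).Preconnected)
    (hTK : T ⊆ K) {x z : V} (hx : x ∈ T) (hz : z ∈ K) (hzT : z ∉ T) :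
    ∃ y ∈ T, ∃ u ∈ K, u ∉ T ∧ G.Adj y u := by
  obtain ⟨p⟩ := hK ⟨x, hTK hx⟩ ⟨z, hz⟩
  obtain ⟨d, -, hd₁, hd₂⟩ := p.exists_boundary_dart (Subtype.val ⁻¹' T) hx hzT
  exact ⟨d.fst, hd₁, d.snd, d.snd.2, hd₂, d.adj⟩

theorem exists_closed_walk_support_subset_ncard_eq {K : Set V}
    (hK : (G.induce K).Preconnected) (hKf : K.Finite) {v : V} (hv : v ∈ K) :
    ∀ n < K.ncard, ∃ w : G.Walk v v,
      {x | x ∈ w.support} ⊆ K ∧ {x | x ∈ w.support}.ncard = n + 1 ∧ w.length = 2 * n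
  | 0, _ => ⟨.nil, by simpa using hv, by simp, rfl⟩
  | n + 1, hn => by
    obtain ⟨w, hwK, hwcard, hwlen⟩ :=
      exists_closed_walk_support_subset_ncard_eq hK hKf hv n (by omega)
    obtain ⟨z, hz, hzw⟩ := Set.exists_mem_notMem_of_ncard_lt_ncard (t := K) (by omega)
      w.support.finite_toSet
    obtain ⟨y, hy, u, hu, huw, hyu⟩ :=
      exists_adj_of_preconnected_induce hK hwK w.start_mem_support hz hzw
    obtain ⟨w', hw'len, hw'supp⟩ := w.exists_support_insert_of_adj hy hyu
    refine ⟨w', ?_, ?_, by omega⟩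
    · rw [hw'supp]; exact Set.insert_subset hu hwK
    · rw [hw'supp, Set.ncard_insert_of_notMem huw (hKf.subset hwK), hwcard]

theorem exists_closed_walk_support_eq {K : Set V} (hK : (G.induce K).Preconnected)
    (hKf : K.Finite) {v : V} (hv : v ∈ K) :
    ∃ w : G.Walk v v, {x | x ∈ w.support} = K ∧ w.length = 2 * (K.ncard - 1) := by
  have hpos : 0 < K.ncard := (Set.ncard_pos hKf).2 ⟨v, hv⟩
  obtain ⟨w, hwK, hwcard, hwlen⟩ :=
    exists_closed_walk_support_subset_ncard_eq hK hKf hv _ (Nat.sub_lt hpos one_pos)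
  exact ⟨w, Set.eq_of_subset_of_ncard_le hwK (by omega) hKf, hwlen⟩

variable [DecidableEq V] [LocallyFinite G] {d : ℕ}

theorem card_finsetWalkLength_le (hdeg : ∀ x, G.degree x ≤ d) (n : ℕ) (u v : V) :
    #(G.finsetWalkLength n u v) ≤ d ^ n := by
  induction n generalizing u with
  | zero => unfold finsetWalkLength; split <;> (try subst_vars) <;> simp
  | succ n ih =>
    calc #(G.finsetWalkLength (n + 1) u v)
        ≤ ∑ w : G.neighborSet u, #(G.finsetWalkLength n w v) := by
          simp only [finsetWalkLength]; exact card_biUnion_le.trans (by simp)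
      _ ≤ ∑ _w : G.neighborSet u, d ^ n := sum_le_sum fun w _ => ih w
      _ ≤ d ^ (n + 1) := by
          rw [sum_const, card_univ, card_neighborSet_eq_degree, smul_eq_mul, pow_succ']
          exact Nat.mul_le_mul_right _ (hdeg u)

theorem card_finsetWalkLengthLT_lt (hd : 2 ≤ d) (hdeg : ∀ x, G.degree x ≤ d) (n : ℕ)
    (u v : V) :
    #(G.finsetWalkLengthLT n u v) < d ^ n :=
  calc #(G.finsetWalkLengthLT n u v)
      = ∑ l ∈ range n, #(G.finsetWalkLength l u v) := card_disjiUnion _ _ _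
    _ ≤ ∑ l ∈ range n, d ^ l := sum_le_sum fun l _ => card_finsetWalkLength_le hdeg l u v
    _ < d ^ n := Nat.geomSum_lt hd fun _ => mem_range.1

theorem ncard_connected_sets_containing_le [Finite V] (hd : 2 ≤ d)
    (hdeg : ∀ x, G.degree x ≤ d) (k : ℕ) (v : V) :
    {K : Set V | v ∈ K ∧ K.ncard ≤ k ∧ (G.induce K).Connected}.ncard ≤ d ^ (2 * k) := by
  have hsub : {K : Set V | v ∈ K ∧ K.ncard ≤ k ∧ (G.induce K).Connected} ⊆
      ((G.finsetWalkLengthLT (2 * k) v v).image fun w => {x | x ∈ w.support} : Set (Set V)) := by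
    rintro K ⟨hv, hKk, hK⟩
    have hpos : 0 < K.ncard := (Set.ncard_pos K.toFinite).2 ⟨v, hv⟩
    obtain ⟨w, hwK, hwlen⟩ := exists_closed_walk_support_eq hK.preconnected K.toFinite hv
    exact mem_image.2 ⟨w, mem_finsetWalkLengthLT_iff.2 (by omega), hwK⟩
  calc _ ≤ _ := Set.ncard_le_ncard hsub (finite_toSet _)
    _ ≤ #(G.finsetWalkLengthLT (2 * k) v v) := by rw [Set.ncard_coe_finset]; exact card_image_le
    _ ≤ d ^ (2 * k) := (card_finsetWalkLengthLT_lt hd hdeg _ v v).le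

end SimpleGraph

theorem connected_sets_bound_general (d k : ℕ) (hd : 2 ≤ d) (G : FinGraph)
    (hdeg : G.DegreeBound d) (v : Fin G.n) :
    {K : Set (Fin G.n) | v ∈ K ∧ K.ncard ≤ k ∧ (G.adj.induce K).Connected}.ncard
      ≤ d ^ (2 * k) := by
  refine G.adj.ncard_connected_sets_containing_le hd (fun x => ?_) k v
  rw [← SimpleGraph.card_neighborSet_eq_degree, ← Nat.card_eq_fintype_card, Nat.card_coe_set_eq]
  exact hdeg x

/-- In a graph `G` with maximum degree at most `d` (`d ≥ 2`), for any vertex `v` the number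
of vertex sets `K ∋ v` with `|K| ≤ k` inducing a connected subgraph is at most `d^{2k}`. -/
theorem connected_sets_bound (d k : ℕ) (hd : 2 ≤ d) (hk : 1 ≤ k) (G : FinGraph)
    (hdeg : G.DegreeBound d) (v : Fin G.n) :
    {K : Set (Fin G.n) | v ∈ K ∧ K.ncard ≤ k ∧ (G.adj.induce K).Connected}.ncard
      ≤ d ^ (2 * k) :=
  connected_sets_bound_general d k hd G hdeg v
end

section
/- With the setup below, for every integer r ≥ 1 it holds that Σ_{K ∈ 𝒦(G)} p_r(K)·|∂K| = 2|S|, where for K ∈ 𝒦(G), ∂K denotes the set of edges of G with exactly one endpoint in K. -/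
open scoped Classical

namespace FinGraph

variable (G : FinGraph)

/-- `𝒦(G)`: vertex sets of size at most `k` inducing a connected subgraph of `G`. -/
def KK (k : ℕ) : Set (Set (Fin G.n)) :=
  {K | K.ncard ≤ k ∧ (G.adj.induce K).Connected}

/-- `𝒦_S(G)`: the vertex sets of the connected components of `G∖S`. -/
def compSets (S : Set (Sym2 (Fin G.n))) : Set (Set (Fin G.n)) :=
  {K | ∃ v : Fin G.n, K = ((G.adj.deleteEdges S).connectedComponentMk v).supp}

/-- `N_r(K)`: the vertices of `G` at distance at most `r` from `K`. -/
def Nset (K : Set (Fin G.n)) (r : ℕ) : Set (Fin G.n) :=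
  {u | ∃ x ∈ K, ∃ p : G.adj.Walk x u, p.length ≤ r}

/-- The pairs `(K, N_r(K))` and `(K', N_r(K'))` are isomorphic: some isomorphism of the
induced subgraph on `N_r(K)` onto the induced subgraph on `N_r(K')` maps `K` onto `K'`. -/
def PairIso (r : ℕ) (K K' : Set (Fin G.n)) : Prop :=
  ∃ φ : (G.adj.induce (G.Nset K r)) ≃g (G.adj.induce (G.Nset K' r)),
    ∀ x : G.Nset K r, ((x : Fin G.n) ∈ K ↔ ((φ x : G.Nset K' r) : Fin G.n) ∈ K')

/-- `Γ_r(K)`: the members `K'` of `𝒦(G)` with `(K', N_r(K'))` isomorphic to `(K, N_r(K))`. -/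
def Gam (k r : ℕ) (K : Set (Fin G.n)) : Set (Set (Fin G.n)) :=
  {K' ∈ G.KK k | G.PairIso r K K'}

/-- `p_r(K) = |Γ_r(K) ∩ 𝒦_S(G)| / |Γ_r(K)|`. -/
noncomputable def pr (k : ℕ) (S : Set (Sym2 (Fin G.n))) (r : ℕ) (K : Set (Fin G.n)) : ℝ :=
  ((G.Gam k r K ∩ G.compSets S).ncard : ℝ) / ((G.Gam k r K).ncard : ℝ)

/-- `q_r(v) = Σ_{K ∈ 𝒦(G), v ∈ K} p_r(K)`. -/
noncomputable def qr (k : ℕ) (S : Set (Sym2 (Fin G.n))) (r : ℕ) (v : Fin G.n) : ℝ :=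
  ∑ᶠ K ∈ {K ∈ G.KK k | v ∈ K}, G.pr k S r K

/-- `∂K`: the edges of `G` with exactly one endpoint in `K`. -/
def edgeBoundary (K : Set (Fin G.n)) : Set (Sym2 (Fin G.n)) :=
  {e ∈ G.adj.edgeSet | ∃ x y : Fin G.n, e = s(x, y) ∧ x ∈ K ∧ y ∉ K}

end FinGraph

section Aux

open SimpleGraph

/-- The induced subgraph on the support of a connected component is connected. -/
lemma induce_supp_connected' {V : Type*} (G : SimpleGraph V) (C : G.ConnectedComponent) :
    (G.induce C.supp).Connected := by
  obtain ⟨w, hw⟩ := Quot.exists_rep C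
  have hwmem : w ∈ C.supp := by
    rw [SimpleGraph.ConnectedComponent.mem_supp_iff]; exact hw
  rw [SimpleGraph.connected_iff]
  refine ⟨?_, ⟨⟨w, hwmem⟩⟩⟩
  · rintro ⟨u, hu⟩ ⟨v, hv⟩
    rw [SimpleGraph.ConnectedComponent.mem_supp_iff] at hu hv
    obtain ⟨p⟩ := SimpleGraph.ConnectedComponent.exact (hu.trans hv.symm)
    have hsub : {x | x ∈ p.support} ⊆ C.supp := by
      intro x hx
      rw [SimpleGraph.ConnectedComponent.mem_supp_iff, ← hu]
      exact (SimpleGraph.ConnectedComponent.sound ⟨p.takeUntil x hx⟩).symm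
    have hconn := p.connected_induce_support
    have hreach := hconn.preconnected ⟨u, by simp⟩ ⟨v, by simp⟩
    have h2 := hreach.map (SimpleGraph.induceHom SimpleGraph.Hom.id hsub)
    convert h2 using 2 <;> rfl

namespace FinGraph

variable {G : FinGraph}

lemma pairIso_refl (r : ℕ) (K : Set (Fin G.n)) : G.PairIso r K K :=
  ⟨(SimpleGraph.Iso.refl (G := G.adj.induce (G.Nset K r))), fun x => Iff.rfl⟩

lemma pairIso_symm {r : ℕ} {K K' : Set (Fin G.n)} (h : G.PairIso r K K') :
    G.PairIso r K' K := by
  obtain ⟨φ, hφ⟩ := h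
  refine ⟨φ.symm, fun y => ?_⟩
  have := hφ (φ.symm y)
  rw [φ.apply_symm_apply] at this
  exact this.symm

lemma pairIso_trans {r : ℕ} {K K' K'' : Set (Fin G.n)}
    (h : G.PairIso r K K') (h' : G.PairIso r K' K'') : G.PairIso r K K'' := by
  obtain ⟨φ, hφ⟩ := h
  obtain ⟨ψ, hψ⟩ := h'
  exact ⟨φ.trans ψ, fun x => (hφ x).trans (hψ (φ x))⟩

lemma gam_eq_of_pairIso {k r : ℕ} {K K' : Set (Fin G.n)} (h : G.PairIso r K K') :
    G.Gam k r K = G.Gam k r K' := by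
  ext K''
  exact and_congr_right fun _ =>
    ⟨fun h2 => pairIso_trans (pairIso_symm h) h2, fun h2 => pairIso_trans h h2⟩

lemma subset_Nset (K : Set (Fin G.n)) (r : ℕ) : K ⊆ G.Nset K r :=
  fun x hx => ⟨x, hx, SimpleGraph.Walk.nil, by simp⟩

lemma adj_mem_Nset {K : Set (Fin G.n)} {x y : Fin G.n} (hx : x ∈ K)
    (ha : G.adj.Adj x y) {r : ℕ} (hr : 1 ≤ r) : y ∈ G.Nset K r :=
  ⟨x, hx, SimpleGraph.Walk.cons ha SimpleGraph.Walk.nil, by simpa using hr⟩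

lemma edgeBoundary_ncard_le {r : ℕ} (hr : 1 ≤ r)
    {K K' : Set (Fin G.n)} (h : G.PairIso r K K') :
    (G.edgeBoundary K).ncard ≤ (G.edgeBoundary K').ncard := by
  classical
  obtain ⟨φ, hφ⟩ := h
  set f : Fin G.n → Fin G.n := fun x =>
    if hx : x ∈ G.Nset K r then ((φ ⟨x, hx⟩ : G.Nset K' r) : Fin G.n) else x with hf
  have hfmem : ∀ (x : Fin G.n) (hx : x ∈ G.Nset K r),
      f x = ((φ ⟨x, hx⟩ : G.Nset K' r) : Fin G.n) := by
    intro x hx; simp [hf, hx]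
  have hmemK : ∀ (x : Fin G.n) (hx : x ∈ G.Nset K r), (x ∈ K ↔ f x ∈ K') := by
    intro x hx; rw [hfmem x hx]; exact hφ ⟨x, hx⟩
  have hadj : ∀ (x y : Fin G.n) (hx : x ∈ G.Nset K r) (hy : y ∈ G.Nset K r),
      G.adj.Adj x y → G.adj.Adj (f x) (f y) := by
    intro x y hx hy ha
    rw [hfmem x hx, hfmem y hy]
    have h2 : (G.adj.induce (G.Nset K r)).Adj ⟨x, hx⟩ ⟨y, hy⟩ := ha
    exact φ.map_rel_iff.mpr h2
  have hinj : Set.InjOn f (G.Nset K r) := by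
    intro a ha b hb hab
    rw [hfmem a ha, hfmem b hb] at hab
    have := φ.injective (Subtype.ext hab)
    exact congrArg Subtype.val this
  have hsub : Sym2.map f '' (G.edgeBoundary K) ⊆ G.edgeBoundary K' := by
    rintro _ ⟨e, he, rfl⟩
    obtain ⟨hes, x, y, rfl, hxK, hyK⟩ := he
    have hxy : G.adj.Adj x y := (SimpleGraph.mem_edgeSet _).mp hes
    have hx : x ∈ G.Nset K r := subset_Nset K r hxK
    have hy : y ∈ G.Nset K r := adj_mem_Nset hxK hxy hr
    rw [Sym2.map_pair_eq]
    exact ⟨(SimpleGraph.mem_edgeSet _).mpr (hadj x y hx hy hxy), f x, f y, rfl,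
      (hmemK x hx).mp hxK, fun hc => hyK ((hmemK y hy).mpr hc)⟩
  have hinj2 : Set.InjOn (Sym2.map f) (G.edgeBoundary K) := by
    rintro e1 he1 e2 he2 h12
    obtain ⟨he1s, x1, y1, rfl, hx1, hy1⟩ := he1
    obtain ⟨he2s, x2, y2, rfl, hx2, hy2⟩ := he2
    have ha1 : G.adj.Adj x1 y1 := (SimpleGraph.mem_edgeSet _).mp he1s
    have ha2 : G.adj.Adj x2 y2 := (SimpleGraph.mem_edgeSet _).mp he2s
    have hmx1 := subset_Nset K r hx1
    have hmy1 := adj_mem_Nset hx1 ha1 hr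
    have hmx2 := subset_Nset K r hx2
    have hmy2 := adj_mem_Nset hx2 ha2 hr
    rw [Sym2.map_pair_eq, Sym2.map_pair_eq, Sym2.eq_iff] at h12
    rw [Sym2.eq_iff]
    rcases h12 with ⟨h1, h2⟩ | ⟨h1, h2⟩
    · exact Or.inl ⟨hinj hmx1 hmx2 h1, hinj hmy1 hmy2 h2⟩
    · exact Or.inr ⟨hinj hmx1 hmy2 h1, hinj hmy1 hmx2 h2⟩
  calc (G.edgeBoundary K).ncard = (Sym2.map f '' G.edgeBoundary K).ncard :=
        (Set.ncard_image_of_injOn hinj2).symm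
    _ ≤ (G.edgeBoundary K').ncard := Set.ncard_le_ncard hsub (Set.toFinite _)

lemma edgeBoundary_ncard_eq {r : ℕ} (hr : 1 ≤ r)
    {K K' : Set (Fin G.n)} (h : G.PairIso r K K') :
    (G.edgeBoundary K).ncard = (G.edgeBoundary K').ncard :=
  le_antisymm (edgeBoundary_ncard_le hr h) (edgeBoundary_ncard_le hr (pairIso_symm h))

lemma compSets_subset_KK {k : ℕ} {S : Set (Sym2 (Fin G.n))}
    (hcomp : ∀ v : Fin G.n,
      (((G.adj.deleteEdges S).connectedComponentMk v).supp).ncard ≤ k) :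
    G.compSets S ⊆ G.KK k := by
  rintro K ⟨v, rfl⟩
  refine ⟨hcomp v, ?_⟩
  have h1 := induce_supp_connected' (G.adj.deleteEdges S)
    ((G.adj.deleteEdges S).connectedComponentMk v)
  refine h1.mono ?_
  intro a b hab
  exact G.adj.deleteEdges_le S hab

end FinGraph

end Aux


open scoped Classical in
lemma FinGraph.sum_boundary_compSets (G : FinGraph) (S : Set (Sym2 (Fin G.n)))
    (hS : S ⊆ G.adj.edgeSet)
    (hsep : ∀ x y : Fin G.n, s(x, y) ∈ S → ¬ (G.adj.deleteEdges S).Reachable x y) :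
    ∑ K ∈ (Set.toFinite (G.compSets S)).toFinset, (G.edgeBoundary K).ncard
      = 2 * S.ncard := by
  classical
  set G' := G.adj.deleteEdges S with hG'
  set Sf := (Set.toFinite S).toFinset with hSf
  set CSf := (Set.toFinite (G.compSets S)).toFinset with hCSf
  have hbd : ∀ K ∈ CSf,
      (G.edgeBoundary K).ncard = (Sf.filter (fun e => e ∈ G.edgeBoundary K)).card := by
    intro K hK
    rw [Set.Finite.mem_toFinset] at hK
    obtain ⟨v, rfl⟩ := hK
    have hsubS : G.edgeBoundary ((G'.connectedComponentMk v).supp) ⊆ S := by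
      rintro e ⟨hes, x, y, rfl, hx, hy⟩
      by_contra heS
      have hadj : G'.Adj x y := by
        rw [hG', SimpleGraph.deleteEdges_adj]
        exact ⟨(SimpleGraph.mem_edgeSet _).mp hes, heS⟩
      apply hy
      rw [SimpleGraph.ConnectedComponent.mem_supp_iff] at hx ⊢
      rw [← hx]
      exact (SimpleGraph.ConnectedComponent.connectedComponentMk_eq_of_adj hadj).symm
    have hset : G.edgeBoundary ((G'.connectedComponentMk v).supp)
        = ↑(Sf.filter (fun e => e ∈ G.edgeBoundary ((G'.connectedComponentMk v).supp))) := by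
      ext e
      simp only [Finset.coe_filter, Set.mem_setOf_eq, Set.Finite.mem_toFinset, hSf]
      exact ⟨fun he => ⟨hsubS he, he⟩, fun he => he.2⟩
    rw [congrArg Set.ncard hset, Set.ncard_coe_finset]
  rw [Finset.sum_congr rfl hbd]
  simp_rw [Finset.card_filter]
  rw [Finset.sum_comm]
  have hcount : ∀ a b : Fin G.n, s(a, b) ∈ S →
      (∑ K ∈ CSf, if s(a, b) ∈ G.edgeBoundary K then 1 else 0) = 2 := by
    intro a b hab
    rw [← Finset.card_filter]
    have hfilter : CSf.filter (fun K => s(a, b) ∈ G.edgeBoundary K)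
        = {(G'.connectedComponentMk a).supp, (G'.connectedComponentMk b).supp} := by
      ext K
      simp only [Finset.mem_filter, Finset.mem_insert, Finset.mem_singleton,
        Set.Finite.mem_toFinset, hCSf]
      constructor
      · rintro ⟨⟨v, rfl⟩, hes, x, y, hxy, hx, hy⟩
        rw [Sym2.eq_iff] at hxy
        rw [SimpleGraph.ConnectedComponent.mem_supp_iff] at hx
        rcases hxy with ⟨h1, h2⟩ | ⟨h1, h2⟩
        · left; rw [h1, hx]
        · right; rw [h2, hx]
      · have hamem : a ∈ (G'.connectedComponentMk a).supp :=
          (SimpleGraph.ConnectedComponent.mem_supp_iff _ _).mpr rfl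
        have hbmem : b ∈ (G'.connectedComponentMk b).supp :=
          (SimpleGraph.ConnectedComponent.mem_supp_iff _ _).mpr rfl
        rintro (rfl | rfl)
        · refine ⟨⟨a, rfl⟩, hS hab, a, b, rfl, hamem, fun hb => ?_⟩
          rw [SimpleGraph.ConnectedComponent.mem_supp_iff] at hb
          exact hsep a b hab (SimpleGraph.ConnectedComponent.exact hb).symm
        · refine ⟨⟨b, rfl⟩, hS hab, b, a, Sym2.eq_swap, hbmem, fun ha => ?_⟩
          rw [SimpleGraph.ConnectedComponent.mem_supp_iff] at ha
          exact hsep a b hab (SimpleGraph.ConnectedComponent.exact ha)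
    rw [hfilter]
    refine Finset.card_pair ?_
    intro hAB
    exact hsep a b hab
      (SimpleGraph.ConnectedComponent.exact
        (SimpleGraph.ConnectedComponent.supp_injective hAB))
  have hcount' : ∀ e ∈ Sf,
      (∑ K ∈ CSf, if e ∈ G.edgeBoundary K then 1 else 0) = 2 := by
    intro e he
    rw [Set.Finite.mem_toFinset] at he
    revert he
    refine Sym2.ind (fun a b hab => hcount a b hab) e
  rw [Finset.sum_congr rfl hcount', Finset.sum_const, smul_eq_mul, mul_comm]
  congr 1
  exact (Set.ncard_eq_toFinset_card S (Set.toFinite S)).symm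

/-- With `G` of degree bound `d` and `S ⊆ E(G)` cutting `G` into components of size at most
`k` (no edge of `S` joining two vertices of the same component of `G∖S`), for every `r ≥ 1`
one has `Σ_{K ∈ 𝒦(G)} p_r(K)·|∂K| = 2|S|`. -/
theorem sum_pr_boundary (d k : ℕ) (hd : 1 ≤ d) (hk : 1 ≤ k)
    (G : FinGraph) (hdeg : G.DegreeBound d)
    (S : Set (Sym2 (Fin G.n))) (hS : S ⊆ G.adj.edgeSet)
    (hcomp : ∀ v : Fin G.n,
      (((G.adj.deleteEdges S).connectedComponentMk v).supp).ncard ≤ k)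
    (hsep : ∀ x y : Fin G.n, s(x, y) ∈ S → ¬ (G.adj.deleteEdges S).Reachable x y)
    (r : ℕ) (hr : 1 ≤ r) :
    ∑ᶠ K ∈ G.KK k, G.pr k S r K * ((G.edgeBoundary K).ncard : ℝ)
      = 2 * (S.ncard : ℝ) := by
  
  classical
  have hCSK : G.compSets S ⊆ G.KK k := FinGraph.compSets_subset_KK hcomp
  set F := (Set.toFinite (G.KK k)).toFinset with hF
  set CSf := (Set.toFinite (G.compSets S)).toFinset with hCSf
  have hfin : ∑ᶠ K ∈ G.KK k, G.pr k S r K * ((G.edgeBoundary K).ncard : ℝ)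
      = ∑ K ∈ F, G.pr k S r K * ((G.edgeBoundary K).ncard : ℝ) := by
    rw [← Set.Finite.coe_toFinset (Set.toFinite (G.KK k)), finsum_mem_coe_finset]
  rw [hfin]
  have step1 : ∀ K ∈ F, G.pr k S r K * ((G.edgeBoundary K).ncard : ℝ)
      = ∑ K' ∈ CSf, if G.PairIso r K K' then
          ((G.edgeBoundary K).ncard : ℝ) / ((G.Gam k r K).ncard : ℝ) else 0 := by
    intro K _
    have hset : G.Gam k r K ∩ G.compSets S = ↑(CSf.filter fun K' => G.PairIso r K K') := by
      ext K'
      simp only [Finset.coe_filter, Set.mem_setOf_eq, Set.Finite.mem_toFinset, hCSf,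
        Set.mem_inter_iff]
      constructor
      · rintro ⟨⟨_, h2⟩, h3⟩; exact ⟨h3, h2⟩
      · rintro ⟨h1, h2⟩; exact ⟨⟨hCSK h1, h2⟩, h1⟩
    rw [FinGraph.pr, hset, Set.ncard_coe_finset, ← Finset.sum_filter,
      Finset.sum_const, nsmul_eq_mul]
    ring
  rw [Finset.sum_congr rfl step1, Finset.sum_comm]
  have step3 : ∀ K' ∈ CSf, (∑ K ∈ F, if G.PairIso r K K' then
      ((G.edgeBoundary K).ncard : ℝ) / ((G.Gam k r K).ncard : ℝ) else 0)
      = ((G.edgeBoundary K').ncard : ℝ) := by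
    intro K' hK'
    rw [Set.Finite.mem_toFinset] at hK'
    have hK'KK : K' ∈ G.KK k := hCSK hK'
    rw [← Finset.sum_filter]
    have hterm : ∀ K ∈ F.filter (fun K => G.PairIso r K K'),
        ((G.edgeBoundary K).ncard : ℝ) / ((G.Gam k r K).ncard : ℝ)
        = ((G.edgeBoundary K').ncard : ℝ) / ((G.Gam k r K').ncard : ℝ) := by
      intro K hK
      rw [Finset.mem_filter] at hK
      rw [FinGraph.edgeBoundary_ncard_eq hr hK.2, FinGraph.gam_eq_of_pairIso hK.2]
    rw [Finset.sum_congr rfl hterm, Finset.sum_const, nsmul_eq_mul]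
    have hfeq : F.filter (fun K => G.PairIso r K K')
        = (Set.toFinite (G.Gam k r K')).toFinset := by
      ext K
      simp only [Finset.mem_filter, Set.Finite.mem_toFinset, hF]
      exact ⟨fun ⟨h1, h2⟩ => ⟨h1, FinGraph.pairIso_symm h2⟩,
        fun ⟨h1, h2⟩ => ⟨h1, FinGraph.pairIso_symm h2⟩⟩
    rw [hfeq, ← Set.ncard_eq_toFinset_card (G.Gam k r K') (Set.toFinite _)]
    have hpos : ((G.Gam k r K').ncard : ℝ) ≠ 0 := by
      have hmem : K' ∈ G.Gam k r K' := ⟨hK'KK, FinGraph.pairIso_refl r K'⟩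
      have h2 := (Set.ncard_pos (Set.toFinite _)).mpr ⟨K', hmem⟩
      exact_mod_cast h2.ne'
    rw [mul_comm, div_mul_cancel₀ _ hpos]
  rw [Finset.sum_congr rfl step3]
  have hfinal := FinGraph.sum_boundary_compSets G S hS hsep
  calc ∑ K' ∈ CSf, ((G.edgeBoundary K').ncard : ℝ)
      = ((∑ K' ∈ CSf, (G.edgeBoundary K').ncard : ℕ) : ℝ) := by push_cast; ring
    _ = 2 * (S.ncard : ℝ) := by rw [hfinal]; push_cast; ring
end

section
/- Let 𝒫 be a monotone graph property and let k ≥ 1 be an integer. Let 𝒦 be the class of finite graphs K such that every connected component of K has at most k vertices and such that the disjoint union of some finite number of copies of K is not in 𝒫. Let 𝒦' be the set of graphs in 𝒦 that do not properly contain another graph of 𝒦 as a subgraph. Then: (a) for every K ∈ 𝒦', the connected components of K are pairwise non-isomorphic; and (b) 𝒦' contains only finitely many graphs up to isomorphism — at most 2^N of them, where N is the number of isomorphism types of connected graphs with at most k vertices. -/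
open scoped Classical

/-- The disjoint union of `m` copies of `K`, as a finite graph on `Fin (m * K.n)`. -/
def FinGraph.copies (K : FinGraph) (m : ℕ) : FinGraph :=
  ⟨m * K.n,
    SimpleGraph.comap (⇑(finProdFinEquiv (m := m) (n := K.n)).symm)
      { Adj := fun p q : Fin m × Fin K.n => p.1 = q.1 ∧ K.adj.Adj p.2 q.2
        symm := ⟨fun p q h => ⟨h.1.symm, K.adj.symm.symm _ _ h.2⟩⟩
        loopless := ⟨fun p h => K.adj.loopless.irrefl p.2 h.2⟩ }⟩

instance graphSetoid : Setoid FinGraph where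
  r := FinGraph.Iso
  iseqv := by
    constructor
    · intro G; exact ⟨RelIso.refl _⟩
    · rintro G G' ⟨φ⟩; exact ⟨φ.symm⟩
    · rintro G G' G'' ⟨φ⟩ ⟨ψ⟩; exact ⟨φ.trans ψ⟩

/-- Isomorphism types of (unrooted) finite graphs. -/
def GraphIsoClass := Quotient graphSetoid

/-- The isomorphism type of a finite graph. -/
def FinGraph.isoClass (G : FinGraph) : GraphIsoClass := Quotient.mk graphSetoid G

/-- The class `𝒦 = 𝒦(𝒫,k)`: graphs all of whose connected components have at most `k`
vertices, such that the disjoint union of some finite (positive) number of copies is not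
in `𝒫`. -/
def KKfam (P : Set FinGraph) (k : ℕ) : Set FinGraph :=
  {K | (∀ v : Fin K.n, ((K.adj.connectedComponentMk v).supp).ncard ≤ k) ∧
       ∃ m : ℕ, 1 ≤ m ∧ K.copies m ∉ P}

/-- The minimal members `𝒦'` of `𝒦`: those that do not properly contain another member of
`𝒦` as a subgraph. -/
def KKfamMin (P : Set FinGraph) (k : ℕ) : Set FinGraph :=
  {K ∈ KKfam P k |
    ¬ ∃ K' ∈ KKfam P k, K'.IsSubgraphOf K ∧ ¬ K.IsSubgraphOf K'}

/-!
If some `K ∈ 𝒦'` had two isomorphic components `c ≅ d`, then `K` would embed into two disjoint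
copies of `K - d`, by mapping `d` onto the copy of `c` in the second copy. Then `m` copies of `K`
embed into `2m` copies of `K - d`, so by monotonicity `K - d ∈ 𝒦`, contradicting minimality.
Consequently a graph in `𝒦'` is determined up to isomorphism by the set of isomorphism types of
its components, a subset of the `N` types of connected graphs with at most `k` vertices.
-/

namespace SimpleGraph

variable {V W V' W' : Type*} {G : SimpleGraph V} {H : SimpleGraph W}

def Iso.ofConnectedComponents (β : G.ConnectedComponent ≃ H.ConnectedComponent)
    (φ : ∀ c, c.toSimpleGraph ≃g (β c).toSimpleGraph) : G ≃g H where
  toEquiv := (Equiv.sigmaFiberEquiv G.connectedComponentMk).symm.trans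
    ((Equiv.sigmaCongr β fun c => (φ c).toEquiv).trans
      (Equiv.sigmaFiberEquiv H.connectedComponentMk))
  map_rel_iff' {x y} := by
    suffices key : ∀ c d (x : c.supp) (y : d.supp),
        H.Adj (φ c x) (φ d y) ↔ G.Adj x y from key _ _ ⟨x, rfl⟩ ⟨y, rfl⟩
    intro c d x y
    by_cases hcd : c = d
    · subst hcd
      exact (φ c).map_rel_iff
    · have hG : ¬ G.Adj x y := fun h =>
        hcd (x.2.symm.trans ((ConnectedComponent.connectedComponentMk_eq_of_adj h).trans y.2))
      have hH : ¬ H.Adj (φ c x) (φ d y) := fun h => hcd (β.injective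
        ((φ c x).2.symm.trans ((ConnectedComponent.connectedComponentMk_eq_of_adj h).trans
          (φ d y).2)))
      exact iff_of_false hH hG

theorem Copy.ncard_supp_le [Finite W] (f : Copy G H) (v : V) :
    (G.connectedComponentMk v).supp.ncard ≤ (H.connectedComponentMk (f v)).supp.ncard := by
  have himage : f '' (G.connectedComponentMk v).supp ⊆ (H.connectedComponentMk (f v)).supp := by
    rintro _ ⟨w, hw, rfl⟩
    rw [ConnectedComponent.mem_supp_iff, ConnectedComponent.eq] at hw ⊢
    exact hw.map f.toHom
  calc (G.connectedComponentMk v).supp.ncard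
      = (f '' (G.connectedComponentMk v).supp).ncard :=
        (Set.ncard_image_of_injective _ f.injective).symm
    _ ≤ _ := Set.ncard_le_ncard himage

theorem IsContained.boxProd {G' : SimpleGraph V'} {H' : SimpleGraph W'} :
    G ⊑ G' → H ⊑ H' → G.boxProd H ⊑ G'.boxProd H' := by
  rintro ⟨f⟩ ⟨g⟩
  refine ⟨⟨⟨Prod.map f g, fun {x y} hxy => ?_⟩, f.injective.prodMap g.injective⟩⟩
  rcases boxProd_adj.mp hxy with ⟨hadj, heq⟩ | ⟨hadj, heq⟩
  · exact boxProd_adj.mpr (.inl ⟨f.toHom.map_adj hadj, congrArg g heq⟩)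
  · exact boxProd_adj.mpr (.inr ⟨g.toHom.map_adj hadj, congrArg f heq⟩)

@[simp]
theorem bot_boxProd_bot : (⊥ : SimpleGraph V).boxProd (⊥ : SimpleGraph W) = ⊥ := by
  ext x y
  simp [boxProd_adj]

theorem bot_boxProd_isContained_of_isContained_bot_boxProd {ι ι' : Type*}
    (h : G ⊑ (⊥ : SimpleGraph ι').boxProd H) :
    (⊥ : SimpleGraph ι).boxProd G ⊑ (⊥ : SimpleGraph (ι × ι')).boxProd H := by
  refine (IsContained.rfl.boxProd h).trans ?_
  rw [← bot_boxProd_bot]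
  exact (boxProdAssoc _ _ _).symm.isContained

theorem isContained_bot_boxProd_induce_compl_of_iso {c d : G.ConnectedComponent} (hcd : c ≠ d)
    (φ : c.toSimpleGraph ≃g d.toSimpleGraph) :
    G ⊑ (⊥ : SimpleGraph (Fin 2)).boxProd (G.induce d.suppᶜ) := by
  have hc : c.supp ⊆ d.suppᶜ := fun x hxc hxd => hcd (hxc.symm.trans hxd)
  -- `d` goes, through `φ⁻¹`, onto the copy of `c` in the second copy of `G - d`.
  let f : V → Fin 2 × ↥(d.suppᶜ) := fun x =>
    if hx : x ∈ d.supp then (1, ⟨φ.symm ⟨x, hx⟩, hc (φ.symm ⟨x, hx⟩).2⟩) else (0, ⟨x, hx⟩)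
  refine ⟨⟨⟨f, fun {x y} hxy => ?_⟩, fun x y hxy => ?_⟩⟩
  · have hxy' := d.mem_supp_congr_adj hxy
    by_cases hx : x ∈ d.supp
    · have hy := hxy'.mp hx
      simp only [f, dif_pos hx, dif_pos hy, boxProd_adj_right]
      exact φ.symm.map_rel_iff.mpr hxy
    · have hy := mt hxy'.mpr hx
      simp only [f, dif_neg hx, dif_neg hy, boxProd_adj_right]
      exact hxy
  · change f x = f y at hxy
    by_cases hx : x ∈ d.supp <;> by_cases hy : y ∈ d.supp
    · simp only [f, dif_pos hx, dif_pos hy, Prod.mk.injEq, Subtype.mk.injEq] at hxy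
      simpa using φ.symm.injective (Subtype.ext hxy.2)
    · simp only [f, dif_pos hx, dif_neg hy, Prod.mk.injEq] at hxy
      exact absurd hxy.1 (by decide)
    · simp only [f, dif_neg hx, dif_pos hy, Prod.mk.injEq] at hxy
      exact absurd hxy.1 (by decide)
    · simp only [f, dif_neg hx, dif_neg hy, Prod.mk.injEq, Subtype.mk.injEq] at hxy
      exact hxy.2

end SimpleGraph

namespace FinGraph

open SimpleGraph

noncomputable def ofSimpleGraph {V : Type*} [Finite V] (G : SimpleGraph V) : FinGraph :=
  ⟨Nat.card V, G.comap (Finite.equivFin V).symm⟩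

noncomputable def ofSimpleGraphIso {V : Type*} [Finite V] (G : SimpleGraph V) :
    (ofSimpleGraph G).adj ≃g G :=
  Iso.comap _ G

theorem isSubgraphOf_iff_isContained {H G : FinGraph} : H.IsSubgraphOf G ↔ H.adj ⊑ G.adj :=
  isContained_iff_exists_le_comap.symm

def copiesIso (K : FinGraph) {m : ℕ} {ι : Type*} (e : ι ≃ Fin m) :
    (K.copies m).adj ≃g (⊥ : SimpleGraph ι).boxProd K.adj where
  toEquiv := finProdFinEquiv.symm.trans (e.symm.prodCongr (Equiv.refl _))
  map_rel_iff' {x y} := by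
    simp only [boxProd_adj, bot_adj, false_and, false_or]
    exact ⟨fun h => ⟨e.symm.injective h.2, h.1⟩, fun h => ⟨h.2, congrArg e.symm h.1⟩⟩

theorem copies_isSubgraphOf_copies_mul {H G : FinGraph} {m' : ℕ}
    (h : H.adj ⊑ (⊥ : SimpleGraph (Fin m')).boxProd G.adj) (m : ℕ) :
    (H.copies m).IsSubgraphOf (G.copies (m * m')) := by
  rw [isSubgraphOf_iff_isContained,
    isContained_congr (H.copiesIso (Equiv.refl _)) (G.copiesIso finProdFinEquiv)]
  exact bot_boxProd_isContained_of_isContained_bot_boxProd h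

theorem finite_setOf_n_le (k : ℕ) : {K : FinGraph | K.n ≤ k}.Finite := by
  refine (Set.finite_range fun K : Σ n : Fin (k + 1), SimpleGraph (Fin n) => ⟨K.1, K.2⟩).subset ?_
  rintro ⟨n, G⟩ hn
  exact ⟨⟨⟨n, Nat.lt_succ_of_le hn⟩, G⟩, rfl⟩

end FinGraph

namespace SimpleGraph

variable {V W : Type*} [Finite V] [Finite W] {G : SimpleGraph V} {H : SimpleGraph W}

noncomputable def isoClass (G : SimpleGraph V) : GraphIsoClass :=
  (FinGraph.ofSimpleGraph G).isoClass

theorem isoClass_eq_isoClass_iff : G.isoClass = H.isoClass ↔ Nonempty (G ≃g H) :=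
  Quotient.eq.trans
    ⟨fun ⟨ψ⟩ => ⟨(FinGraph.ofSimpleGraphIso G).symm.trans (ψ.trans (FinGraph.ofSimpleGraphIso H))⟩,
     fun ⟨χ⟩ => ⟨(FinGraph.ofSimpleGraphIso G).trans (χ.trans (FinGraph.ofSimpleGraphIso H).symm)⟩⟩

theorem nonempty_iso_of_range_isoClass_eq
    (hG : Function.Injective fun c : G.ConnectedComponent => c.toSimpleGraph.isoClass)
    (hH : Function.Injective fun c : H.ConnectedComponent => c.toSimpleGraph.isoClass)
    (h : Set.range (fun c : G.ConnectedComponent => c.toSimpleGraph.isoClass) =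
      Set.range fun c : H.ConnectedComponent => c.toSimpleGraph.isoClass) :
    Nonempty (G ≃g H) := by
  let β : G.ConnectedComponent ≃ H.ConnectedComponent :=
    (Equiv.ofInjective _ hG).trans ((Equiv.setCongr h).trans (Equiv.ofInjective _ hH).symm)
  have hβ : ∀ c, c.toSimpleGraph.isoClass = (β c).toSimpleGraph.isoClass := fun c =>
    (Equiv.apply_ofInjective_symm hH (Equiv.setCongr h (Equiv.ofInjective _ hG c))).symm
  exact ⟨Iso.ofConnectedComponents β fun c => (isoClass_eq_isoClass_iff.mp (hβ c)).some⟩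

end SimpleGraph

open SimpleGraph

def FinGraph.componentTypes (K : FinGraph) : Set GraphIsoClass :=
  Set.range fun c : K.adj.ConnectedComponent => c.toSimpleGraph.isoClass

def smallConnectedTypes (k : ℕ) : Set GraphIsoClass :=
  {c | ∃ K : FinGraph, K.isoClass = c ∧ K.adj.Connected ∧ K.n ≤ k}

theorem smallConnectedTypes_finite (k : ℕ) : (smallConnectedTypes k).Finite :=
  ((FinGraph.finite_setOf_n_le k).image FinGraph.isoClass).subset
    fun _ ⟨K, hK, _, hn⟩ => ⟨K, hn, hK⟩

section KKfam

variable {P : Set FinGraph} {k : ℕ} {K : FinGraph}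

theorem componentTypes_subset_smallConnectedTypes (hK : K ∈ KKfam P k) :
    K.componentTypes ⊆ smallConnectedTypes k := by
  rintro _ ⟨c, rfl⟩
  refine ⟨_, rfl, (FinGraph.ofSimpleGraphIso _).connected_iff.mpr c.connected_toSimpleGraph, ?_⟩
  induction c using ConnectedComponent.ind with
  | _ v => exact hK.1 v

theorem exists_smaller_mem_KKfam_of_iso_components (hMono : MonotoneProp P)
    (hK : K ∈ KKfam P k) {c d : K.adj.ConnectedComponent} (hcd : c ≠ d)
    (φ : c.toSimpleGraph ≃g d.toSimpleGraph) :
    ∃ K' ∈ KKfam P k, K'.IsSubgraphOf K ∧ ¬ K.IsSubgraphOf K' := by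
  let K' := FinGraph.ofSimpleGraph (K.adj.induce d.suppᶜ)
  have hK'K : K'.adj ⊑ K.adj :=
    (FinGraph.ofSimpleGraphIso _).isContained.trans (Copy.induce _ _).isContained
  have hKK' : K.adj ⊑ (⊥ : SimpleGraph (Fin 2)).boxProd K'.adj :=
    (isContained_bot_boxProd_induce_compl_of_iso hcd φ).trans
      (IsContained.rfl.boxProd (FinGraph.ofSimpleGraphIso _).symm.isContained)
  obtain ⟨hsize, m, hm, hmP⟩ := hK
  refine ⟨K', ⟨fun v => ?_, m * 2, by omega, fun hP => hmP ?_⟩,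
    FinGraph.isSubgraphOf_iff_isContained.mpr hK'K, fun h => ?_⟩
  · obtain ⟨f⟩ := hK'K
    exact (f.ncard_supp_le v).trans (hsize _)
  · exact hMono _ hP _ (FinGraph.copies_isSubgraphOf_copies_mul hKK' m)
  · obtain ⟨f⟩ := FinGraph.isSubgraphOf_iff_isContained.mp h
    have hle : K.n ≤ K'.n := by simpa using Fintype.card_le_of_injective f f.injective
    have hlt : K'.n < K.n := by
      have := Set.ncard_lt_card (Set.compl_ne_univ.mpr d.nonempty_supp)
      rwa [Nat.card_eq_fintype_card, Fintype.card_fin] at this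
    omega

theorem injective_isoClass_components_of_mem_KKfamMin (hMono : MonotoneProp P)
    (hK : K ∈ KKfamMin P k) :
    Function.Injective fun c : K.adj.ConnectedComponent => c.toSimpleGraph.isoClass := by
  intro c d h
  by_contra hcd
  exact hK.2 (exists_smaller_mem_KKfam_of_iso_components hMono hK.1 hcd
    (isoClass_eq_isoClass_iff.mp h).some)

end KKfam

theorem exists_finite_representatives {α β : Type*} [Nonempty α] {A : Set α} (F : α → β)
    {r : α → α → Prop} (hF : ∀ a ∈ A, ∀ b ∈ A, F a = F b → r a b) (hA : (F '' A).Finite) :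
    ∃ Z : Set α, Z.Finite ∧ Z.ncard ≤ (F '' A).ncard ∧ ∀ a ∈ A, ∃ z ∈ Z, r a z := by
  refine ⟨Function.invFunOn F A '' (F '' A), hA.image _, Set.ncard_image_le hA,
    fun a ha => ⟨_, Set.mem_image_of_mem _ (Set.mem_image_of_mem F ha), ?_⟩⟩
  have hex : ∃ a' ∈ A, F a' = F a := ⟨a, ha, rfl⟩
  exact hF a ha _ (Function.invFunOn_mem hex) (Function.invFunOn_eq hex).symm

instance : Inhabited FinGraph := ⟨⟨0, ⊥⟩⟩

theorem minimal_family_finite_general (P : Set FinGraph)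
    (hMono : MonotoneProp P) (k : ℕ) :
    (∀ K ∈ KKfamMin P k, ∀ u v : Fin K.n, ¬ K.adj.Reachable u v →
      ¬ Nonempty
        ((K.adj.induce ((K.adj.connectedComponentMk u).supp)) ≃g
         (K.adj.induce ((K.adj.connectedComponentMk v).supp)))) ∧
    (∃ Z : Set FinGraph, Z.Finite ∧
      Z.ncard ≤
        2 ^ ({c : GraphIsoClass |
          ∃ K : FinGraph, K.isoClass = c ∧ K.adj.Connected ∧ K.n ≤ k}.ncard) ∧
      ∀ K ∈ KKfamMin P k, ∃ z ∈ Z, FinGraph.Iso K z) := by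
  refine ⟨fun K hK u v huv ⟨φ⟩ => hK.2 (exists_smaller_mem_KKfam_of_iso_components hMono hK.1
    (fun h => huv (ConnectedComponent.exact h)) φ), ?_⟩
  have hT := smallConnectedTypes_finite k
  have himage : FinGraph.componentTypes '' KKfamMin P k ⊆ 𝒫 smallConnectedTypes k := by
    rintro _ ⟨K, hK, rfl⟩
    exact componentTypes_subset_smallConnectedTypes hK.1
  obtain ⟨Z, hZ, hZcard, hZK⟩ := exists_finite_representatives FinGraph.componentTypes
    (r := FinGraph.Iso) (fun K hK K' hK' h => nonempty_iso_of_range_isoClass_eq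
      (injective_isoClass_components_of_mem_KKfamMin hMono hK)
      (injective_isoClass_components_of_mem_KKfamMin hMono hK') h)
    (hT.powerset.subset himage)
  refine ⟨Z, hZ, hZcard.trans ?_, hZK⟩
  calc (FinGraph.componentTypes '' KKfamMin P k).ncard
      ≤ (𝒫 smallConnectedTypes k).ncard := Set.ncard_le_ncard himage hT.powerset
    _ = 2 ^ (smallConnectedTypes k).ncard := Set.ncard_powerset _ hT

/-- For a monotone graph property `𝒫` and `k ≥ 1`: (a) for every `K ∈ 𝒦'`, distinct
connected components of `K` are non-isomorphic; (b) up to isomorphism, `𝒦'` has at most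
`2^N` members, where `N` is the number of isomorphism types of connected graphs with at
most `k` vertices. -/
theorem minimal_family_finite (P : Set FinGraph) (hIso : IsoClosed P)
    (hMono : MonotoneProp P) (k : ℕ) (hk : 1 ≤ k) :
    (∀ K ∈ KKfamMin P k, ∀ u v : Fin K.n, ¬ K.adj.Reachable u v →
      ¬ Nonempty
        ((K.adj.induce ((K.adj.connectedComponentMk u).supp)) ≃g
         (K.adj.induce ((K.adj.connectedComponentMk v).supp)))) ∧
    (∃ Z : Set FinGraph, Z.Finite ∧
      Z.ncard ≤
        2 ^ ({c : GraphIsoClass |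
          ∃ K : FinGraph, K.isoClass = c ∧ K.adj.Connected ∧ K.n ≤ k}.ncard) ∧
      ∀ K ∈ KKfamMin P k, ∃ z ∈ Z, FinGraph.Iso K z) :=
  minimal_family_finite_general P hMono k
end

section
/- Let H be a connected finite graph with at least one edge, let d, k ≥ 1 be integers and ε > 0 a real. Let G be a finite graph with degree bound d such that: (i) there exists S ⊆ E(G) with |S| ≤ (ε·d/2)·|V(G)| such that every connected component of G∖S has at most k vertices; and (ii) G is ε-far from the property of being H-minor free. Then at least (ε/k)·|V(G)| vertices v of G have the property that B_G(v,k) contains H as a minor. -/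
open scoped Classical

/-!
Let `W` be the set of vertices whose `k`-ball contains `H` as a minor and suppose
`|W| < (ε/k)·n`. Deleting `S` together with all edges inside `W` removes fewer than `ε·d·n` edges
(the degree bound gives at most `d·|W|/2` edges inside `W`), so by farness the remaining graph
still has an `H`-minor. As `H` is connected, its branch sets lie in a single component `C` of
`G ∖ S`; since `|C| ≤ k`, `C` lies in the `k`-ball of each of its vertices, so `C ⊆ W`. An edge of
`H` is realised by an edge between two branch sets, hence inside `C ⊆ W`: but all those were deleted.
-/

namespace SimpleGraph

variable {V W : Type*} {G G' : SimpleGraph V} {H : SimpleGraph W}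

def IsMinorModel (G : SimpleGraph V) (H : SimpleGraph W) (B : W → Set V) : Prop :=
  (∀ u, (G.induce (B u)).Connected) ∧
  (∀ u u', u ≠ u' → Disjoint (B u) (B u')) ∧
  (∀ u u', H.Adj u u' → ∃ x ∈ B u, ∃ y ∈ B u', G.Adj x y)

namespace IsMinorModel

variable {B : W → Set V}

theorem mono (hB : G.IsMinorModel H B) (hle : G ≤ G') : G'.IsMinorModel H B := by
  obtain ⟨hconn, hdisj, hadj⟩ := hB
  refine ⟨fun u => (hconn u).mono fun _ _ h => hle h, hdisj, fun u u' h => ?_⟩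
  obtain ⟨x, hx, y, hy, hxy⟩ := hadj u u' h
  exact ⟨x, hx, y, hy, hle hxy⟩

theorem reachable (hB : G.IsMinorModel H B) (hH : H.Preconnected) {u u' : W} {a b : V}
    (ha : a ∈ B u) (hb : b ∈ B u') : G.Reachable a b := by
  obtain ⟨hconn, -, hadj⟩ := hB
  have hwithin : ∀ u, ∀ a ∈ B u, ∀ b ∈ B u, G.Reachable a b := fun u a ha b hb =>
    ((hconn u).preconnected ⟨a, ha⟩ ⟨b, hb⟩).map (Embedding.induce (B u)).toHom
  obtain ⟨p⟩ := hH u u'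
  induction p generalizing a with
  | nil => exact hwithin _ a ha b hb
  | cons hxy _ ih =>
    obtain ⟨c, hc, e, he, hce⟩ := hadj _ _ hxy
    exact ((hwithin _ a ha c hc).trans hce.reachable).trans (ih he hb)

theorem hasMinor_induce (hB : G.IsMinorModel H B) {T : Set V} (hT : ∀ u, B u ⊆ T) :
    (G.induce T).HasMinor H := by
  obtain ⟨hconn, hdisj, hadj⟩ := hB
  refine ⟨fun u => {x : T | x.1 ∈ B u}, fun u => ?_, fun u u' h => ?_, fun u u' h => ?_⟩
  · refine (hconn u).map ⟨fun x => ⟨⟨x.1, hT u x.2⟩, x.2⟩, id⟩ ?_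
    rintro ⟨⟨x, -⟩, hx⟩
    exact ⟨⟨x, hx⟩, rfl⟩
  · exact Set.disjoint_left.mpr fun x hx hx' => Set.disjoint_left.mp (hdisj u u' h) hx hx'
  · obtain ⟨x, hx, y, hy, hxy⟩ := hadj u u' h
    exact ⟨⟨x, hT u hx⟩, hx, ⟨y, hT u' hy⟩, hy, hxy⟩

end IsMinorModel

theorem Reachable.exists_walk_length_lt_ncard_supp [Finite V] {a b : V} (h : G.Reachable a b) :
    ∃ p : G.Walk a b, p.length < (G.connectedComponentMk a).supp.ncard := by
  classical
  let p := h.some.toPath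
  refine ⟨p, ?_⟩
  have hsupp : (↑p.1.support.toFinset : Set V) ⊆ (G.connectedComponentMk a).supp := by
    intro x hx
    rw [Finset.mem_coe, List.mem_toFinset] at hx
    exact ConnectedComponent.sound ⟨(p.1.takeUntil x hx).reverse⟩
  calc p.1.length < p.1.support.length := by rw [Walk.length_support]; omega
    _ = (↑p.1.support.toFinset : Set V).ncard := by
      rw [Set.ncard_coe_finset, List.toFinset_card_of_nodup p.2.support_nodup]
    _ ≤ _ := Set.ncard_le_ncard hsupp

theorem two_mul_card_edgeFinset_inter_sym2_le [Fintype V] [DecidableEq V] [DecidableRel G.Adj]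
    {d : ℕ} (hdeg : ∀ v, G.degree v ≤ d) (s : Set V) [DecidablePred (· ∈ s)] :
    2 * (G.edgeFinset ∩ s.toFinset.sym2).card ≤ d * s.ncard := by
  rw [← map_edgeFinset_induce, Finset.card_map, ← sum_degrees_eq_twice_card_edges, mul_comm,
    Set.ncard_eq_toFinset_card', Set.toFinset_card, ← smul_eq_mul, ← Finset.card_univ,
    ← Finset.sum_const]
  exact Finset.sum_le_sum fun v _ => ((Copy.induce G s).degree_le v).trans (hdeg v)

end SimpleGraph

namespace FinGraph

open SimpleGraph

variable {G : FinGraph} {G' : SimpleGraph (Fin G.n)} {k : ℕ}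

theorem DegreeBound.degree_le {d : ℕ} (h : G.DegreeBound d) (v : Fin G.n) :
    G.adj.degree v ≤ d := by
  rw [← card_neighborSet_eq_degree, ← Nat.card_eq_fintype_card, Nat.card_coe_set_eq]
  exact h v

theorem mem_ball_of_reachable (hle : G' ≤ G.adj) {w c : Fin G.n}
    (hcomp : (G'.connectedComponentMk w).supp.ncard ≤ k) (h : G'.Reachable w c) :
    c ∈ G.ball w k := by
  obtain ⟨p, hp⟩ := h.exists_walk_length_lt_ncard_supp
  exact ⟨p.mapLe hle, by rw [Walk.length_mapLe]; omega⟩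

theorem exists_adj_ball_hasMinor {S : Set (Sym2 (Fin G.n))}
    (hcomp : ∀ v, ((G.adj.deleteEdges S).connectedComponentMk v).supp.ncard ≤ k)
    (hle : G' ≤ G.adj.deleteEdges S) {W : Type*} {H : SimpleGraph W} (hH : H.Preconnected)
    (hedge : ∃ x y, H.Adj x y) (hminor : G'.HasMinor H) :
    ∃ a b, G'.Adj a b ∧ (G.adj.induce (G.ball a k)).HasMinor H ∧
      (G.adj.induce (G.ball b k)).HasMinor H := by
  obtain ⟨B, hB⟩ : ∃ B, G'.IsMinorModel H B := hminor
  obtain ⟨x, y, hxy⟩ := hedge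
  obtain ⟨a, ha, b, hb, hab⟩ := hB.2.2 x y hxy
  have hball : ∀ w, (G.adj.deleteEdges S).Reachable a w →
      (G.adj.induce (G.ball w k)).HasMinor H := fun w hw =>
    (hB.mono (hle.trans (deleteEdges_le S))).hasMinor_induce fun u c hc =>
      mem_ball_of_reachable (deleteEdges_le S) (hcomp w)
        (hw.symm.trans ((hB.mono hle).reachable hH ha hc))
  exact ⟨a, b, hab, hball a .rfl, hball b (hle hab).reachable⟩

theorem DegreeBound.ncard_union_edgesWithin_lt {d : ℕ} {ε : ℝ} (hdeg : G.DegreeBound d)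
    (hd : 1 ≤ d) {S : Set (Sym2 (Fin G.n))} (hS : (S.ncard : ℝ) ≤ ε * d / 2 * G.n)
    {W : Set (Fin G.n)} (hW : (W.ncard : ℝ) < ε * G.n) :
    ((S ∪ ↑(G.adj.edgeFinset ∩ W.toFinset.sym2)).ncard : ℝ) < ε * d * G.n := by
  have hEW : (2 * (G.adj.edgeFinset ∩ W.toFinset.sym2).card : ℝ) ≤ d * W.ncard := by
    exact_mod_cast G.adj.two_mul_card_edgeFinset_inter_sym2_le hdeg.degree_le W
  calc _ ≤ (S.ncard : ℝ) + (G.adj.edgeFinset ∩ W.toFinset.sym2).card := by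
        exact_mod_cast (Set.ncard_union_le _ _).trans_eq (by rw [Set.ncard_coe_finset])
    _ ≤ ε * d / 2 * G.n + d * W.ncard / 2 := by linarith
    _ < ε * d / 2 * G.n + d * (ε * G.n) / 2 := by gcongr
    _ = ε * d * G.n := by ring

end FinGraph

theorem FarFrom.deleteEdges_notMem {G : FinGraph} {d : ℕ} {ε : ℝ} {P : Set FinGraph}
    (hfar : FarFrom G d ε P) {D : Set (Sym2 (Fin G.n))} (hD : D ⊆ G.adj.edgeSet)
    (hcard : (D.ncard : ℝ) < ε * d * G.n) : (⟨G.n, G.adj.deleteEdges D⟩ : FinGraph) ∉ P := by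
  intro hmem
  have hsymm : symmDiff G.adj.edgeSet (G.adj.deleteEdges D).edgeSet = D := by
    rw [SimpleGraph.edgeSet_deleteEdges, symmDiff_of_ge Set.sdiff_subset, sdiff_sdiff_right_self,
      inf_eq_right.mpr hD]
  have := hfar _ hmem
  rw [hsymm] at this
  linarith

theorem many_balls_contain_minor_general (H : FinGraph) (hHconn : H.adj.Connected)
    (hHedge : ∃ x y : Fin H.n, H.adj.Adj x y)
    (d k : ℕ) (hd : 1 ≤ d) (ε : ℝ)
    (G : FinGraph) (hdeg : G.DegreeBound d)
    (hcut : ∃ S ⊆ G.adj.edgeSet, (S.ncard : ℝ) ≤ (ε * d / 2) * G.n ∧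
      ∀ v : Fin G.n, (((G.adj.deleteEdges S).connectedComponentMk v).supp).ncard ≤ k)
    (hfar : FarFrom G d ε {G' : FinGraph | ¬ G'.HasMinor H}) :
    (ε / k) * G.n ≤
      ({v : Fin G.n |
        SimpleGraph.HasMinor (G.adj.induce (G.ball v k)) H.adj}.ncard : ℝ) := by
  obtain ⟨S, hSG, hScard, hScomp⟩ := hcut
  set W := {v : Fin G.n | SimpleGraph.HasMinor (G.adj.induce (G.ball v k)) H.adj}
  by_contra! hW
  have hεk : 0 < ε / k := pos_of_mul_pos_left ((Nat.cast_nonneg _).trans_lt hW) G.n.cast_nonneg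
  obtain ⟨hε, hk⟩ : 0 < ε ∧ (0 : ℝ) < k :=
    (div_pos_iff.mp hεk).resolve_right fun h => h.2.not_ge k.cast_nonneg
  have hWε : (W.ncard : ℝ) < ε * G.n := hW.trans_le (by
    gcongr
    exact div_le_self hε.le (Nat.one_le_cast.mpr (Nat.cast_pos.mp hk)))
  set EW := G.adj.edgeFinset ∩ W.toFinset.sym2
  have hminor : (G.adj.deleteEdges (S ∪ ↑EW)).HasMinor H.adj := by
    by_contra hno
    exact hfar.deleteEdges_notMem
      (Set.union_subset hSG fun _ he => G.adj.mem_edgeFinset.mp (Finset.mem_inter.mp he).1)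
      (hdeg.ncard_union_edgesWithin_lt hd hScard hWε) hno
  obtain ⟨a, b, hab, ha, hb⟩ := G.exists_adj_ball_hasMinor hScomp
    (SimpleGraph.deleteEdges_anti Set.subset_union_left) hHconn.preconnected hHedge hminor
  rw [SimpleGraph.deleteEdges_adj] at hab
  exact hab.2 (Or.inr (by simp [EW, W, ha, hb, hab.1]))

/-- Let `H` be a connected graph with at least one edge, and let `G` have degree bound `d`.
If (i) some `S ⊆ E(G)` with `|S| ≤ (ε·d/2)·|V(G)|` cuts `G` into components of at most `k`
vertices, and (ii) `G` is `ε`-far from being `H`-minor free, then at least `(ε/k)·|V(G)|`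
vertices `v` of `G` are such that `B_G(v,k)` contains `H` as a minor. -/
theorem many_balls_contain_minor (H : FinGraph) (hHconn : H.adj.Connected)
    (hHedge : ∃ x y : Fin H.n, H.adj.Adj x y)
    (d k : ℕ) (hd : 1 ≤ d) (hk : 1 ≤ k) (ε : ℝ) (hε : 0 < ε)
    (G : FinGraph) (hdeg : G.DegreeBound d)
    (hcut : ∃ S ⊆ G.adj.edgeSet, (S.ncard : ℝ) ≤ (ε * d / 2) * G.n ∧
      ∀ v : Fin G.n, (((G.adj.deleteEdges S).connectedComponentMk v).supp).ncard ≤ k)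
    (hfar : FarFrom G d ε {G' : FinGraph | ¬ G'.HasMinor H}) :
    (ε / k) * G.n ≤
      ({v : Fin G.n |
        SimpleGraph.HasMinor (G.adj.induce (G.ball v k)) H.adj}.ncard : ℝ) :=
  many_balls_contain_minor_general H hHconn hHedge d k hd ε G hdeg hcut hfar
end
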